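/- Let P be a prime 𝔇*-stable ideal of R such that at least one of the intersections P ∩ ℂ[X], P ∩ ℂ[Y], P ∩ ℂ[Z] is nonzero. Then the ideal (Y, Z) is contained in P; in particular χ ∈ P. -/
import Mathlib


noncomputable section

open MvPolynomial

/-- `R = ℂ[X, Y, Z]`, with `X = X 0`, `Y = X 1`, `Z = X 2`. -/
abbrev R3 : Type := MvPolynomial (Fin 3) ℂ

/-- The derivation `d*`. -/
def dstar : Derivation ℂ R3 R3 :=
  MvPolynomial.mkDerivation ℂ
    ![C (4/5) * X 1 * ((X 0) ^ 3 - C 1050 * X 2),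
      C (1/10) * X 0 * (C 7 * (X 2) ^ 2 - C 15 * X 0 * (X 1) ^ 2),
      -(C (2/5)) * X 1 * ((X 0) ^ 2 * X 2 + C 875 * (X 1) ^ 2)]

/-- The derivation `e*`. -/
def estar : Derivation ℂ R3 R3 :=
  MvPolynomial.mkDerivation ℂ
    ![-(C 1152) * (X 2) ^ 2 + C 240 * X 0 * (X 1) ^ 2 + C (4/5) * (X 0) ^ 3 * X 2,
      X 1 * (-(C (6/5)) * (X 0) ^ 2 * X 2 + C 200 * (X 1) ^ 2),
      -(C 240) * (X 1) ^ 2 * X 2 - C (8/5) * (X 0) ^ 2 * (X 2) ^ 2 + C (4/5) * (X 0) ^ 3 * (X 1) ^ 2]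

/-- The derivation `f*`. -/
def fstar : Derivation ℂ R3 R3 :=
  MvPolynomial.mkDerivation ℂ
    ![X 1 * (C 550 * (X 1) ^ 2 - C (4/5) * (X 0) ^ 2 * X 2),
      X 2 * (C (7/2) * X 0 * (X 1) ^ 2 - C (33/10) * (X 2) ^ 2),
      X 1 * (C (11/4) * (X 0) ^ 2 * (X 1) ^ 2 - C (59/20) * X 0 * (X 2) ^ 2)]

/-- The polynomial `χ`. -/
def chi : R3 :=
  C (484/49) * (C 50000 * (X 1) ^ 6 - C 1000 * (X 0) ^ 2 * X 2 * (X 1) ^ 4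
    + (X 0) ^ 5 * (X 1) ^ 4 - C 2 * (X 0) ^ 4 * (X 2) ^ 2 * (X 1) ^ 2
    + C 1800 * X 0 * (X 2) ^ 3 * (X 1) ^ 2 + (X 0) ^ 3 * (X 2) ^ 4 - C 864 * (X 2) ^ 5)

/-- An ideal of `R` is `𝔇*`-stable if it is stable under `d*`, `e*` and `f*`. -/
def DStarStable (I : Ideal R3) : Prop :=
  (∀ p ∈ I, dstar p ∈ I) ∧ (∀ p ∈ I, estar p ∈ I) ∧ (∀ p ∈ I, fstar p ∈ I)


section Aux

lemma derC (D : Derivation ℂ R3 R3) (t : ℂ) : D (C t) = 0 := by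
  have h : (C t : R3) = algebraMap ℂ R3 t := rfl
  rw [h, Derivation.map_algebraMap]

lemma Cfrac (u v : ℂ) (n : ℕ) [n.AtLeastTwo] (h : u * v = OfNat.ofNat n) :
    (C u : R3) * C v = OfNat.ofNat n := by rw [← map_mul, h, map_ofNat]

lemma hd0' : (C 5 : R3) * dstar (X 0) = 4 * (X 1 * ((X 0)^3 - 1050 * X 2)) := by
  have h : dstar (X 0) = C (4/5) * X 1 * ((X 0) ^ 3 - C 1050 * X 2) := by
    simp [dstar, MvPolynomial.mkDerivation_X]
  have h1 : (C 5 : R3) * C (4/5) = 4 := Cfrac _ _ _ (by norm_num)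
  rw [h]
  simp only [map_ofNat] at h1 ⊢
  linear_combination (X 1 * ((X 0)^3 - 1050 * X 2) : R3) * h1

lemma hd1' : (C 10 : R3) * dstar (X 1) = X 0 * (7 * (X 2)^2 - 15 * X 0 * (X 1)^2) := by
  have h : dstar (X 1) = C (1/10) * X 0 * (C 7 * (X 2) ^ 2 - C 15 * X 0 * (X 1) ^ 2) := by
    simp [dstar, MvPolynomial.mkDerivation_X]
  have h1 : (C 10 : R3) * C (1/10) = 1 := by
    rw [← map_mul, show (10:ℂ) * (1/10) = 1 by norm_num, map_one]
  rw [h]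
  simp only [map_ofNat] at h1 ⊢
  linear_combination (X 0 * (7 * (X 2)^2 - 15 * X 0 * (X 1)^2) : R3) * h1

lemma hd2' : (C 5 : R3) * dstar (X 2) = -2 * (X 1 * ((X 0)^2 * X 2 + 875 * (X 1)^2)) := by
  have h : dstar (X 2) = -(C (2/5)) * X 1 * ((X 0) ^ 2 * X 2 + C 875 * (X 1) ^ 2) := by
    simp [dstar, MvPolynomial.mkDerivation_X]
  have h1 : (C 5 : R3) * C (2/5) = 2 := Cfrac _ _ _ (by norm_num)
  rw [h]
  simp only [map_ofNat] at h1 ⊢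
  linear_combination (-(X 1 * ((X 0)^2 * X 2 + 875 * (X 1)^2)) : R3) * h1

lemma he0' : (C 5 : R3) * estar (X 0) = -5760 * (X 2)^2 + 1200 * X 0 * (X 1)^2 + 4 * (X 0)^3 * X 2 := by
  have h : estar (X 0) = -(C 1152) * (X 2) ^ 2 + C 240 * X 0 * (X 1) ^ 2 + C (4/5) * (X 0) ^ 3 * X 2 := by
    simp [estar, MvPolynomial.mkDerivation_X]
  have h1 : (C 5 : R3) * C (4/5) = 4 := Cfrac _ _ _ (by norm_num)
  rw [h]
  simp only [map_ofNat] at h1 ⊢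
  linear_combination ((X 0)^3 * X 2 : R3) * h1

lemma he1' : (C 5 : R3) * estar (X 1) = X 1 * (-6 * (X 0)^2 * X 2 + 1000 * (X 1)^2) := by
  have h : estar (X 1) = X 1 * (-(C (6/5)) * (X 0) ^ 2 * X 2 + C 200 * (X 1) ^ 2) := by
    simp [estar, MvPolynomial.mkDerivation_X]
  have h1 : (C 5 : R3) * C (6/5) = 6 := Cfrac _ _ _ (by norm_num)
  rw [h]
  simp only [map_ofNat] at h1 ⊢
  linear_combination (-(X 1 * (X 0)^2 * X 2) : R3) * h1

lemma he2' : (C 5 : R3) * estar (X 2) = -1200 * (X 1)^2 * X 2 - 8 * (X 0)^2 * (X 2)^2 + 4 * (X 0)^3 * (X 1)^2 := by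
  have h : estar (X 2) = -(C 240) * (X 1) ^ 2 * X 2 - C (8/5) * (X 0) ^ 2 * (X 2) ^ 2 + C (4/5) * (X 0) ^ 3 * (X 1) ^ 2 := by
    simp [estar, MvPolynomial.mkDerivation_X]
  have h1 : (C 5 : R3) * C (8/5) = 8 := Cfrac _ _ _ (by norm_num)
  have h2 : (C 5 : R3) * C (4/5) = 4 := Cfrac _ _ _ (by norm_num)
  rw [h]
  simp only [map_ofNat] at h1 h2 ⊢
  linear_combination (-((X 0)^2 * (X 2)^2) : R3) * h1 + ((X 0)^3 * (X 1)^2 : R3) * h2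

lemma hf1' : (C 10 : R3) * fstar (X 1) = X 2 * (35 * X 0 * (X 1)^2 - 33 * (X 2)^2) := by
  have h : fstar (X 1) = X 2 * (C (7/2) * X 0 * (X 1) ^ 2 - C (33/10) * (X 2) ^ 2) := by
    simp [fstar, MvPolynomial.mkDerivation_X]
  have h1 : (C 10 : R3) * C (7/2) = 35 := Cfrac _ _ _ (by norm_num)
  have h2 : (C 10 : R3) * C (33/10) = 33 := Cfrac _ _ _ (by norm_num)
  rw [h]
  simp only [map_ofNat] at h1 h2 ⊢
  linear_combination (X 2 * X 0 * (X 1)^2 : R3) * h1 + (-(X 2 * (X 2)^2) : R3) * h2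

lemma hf2' : (C 20 : R3) * fstar (X 2) = X 1 * (55 * (X 0)^2 * (X 1)^2 - 59 * X 0 * (X 2)^2) := by
  have h : fstar (X 2) = X 1 * (C (11/4) * (X 0) ^ 2 * (X 1) ^ 2 - C (59/20) * X 0 * (X 2) ^ 2) := by
    simp [fstar, MvPolynomial.mkDerivation_X]
  have h1 : (C 20 : R3) * C (11/4) = 55 := Cfrac _ _ _ (by norm_num)
  have h2 : (C 20 : R3) * C (59/20) = 59 := Cfrac _ _ _ (by norm_num)
  rw [h]
  simp only [map_ofNat] at h1 h2 ⊢
  linear_combination (X 1 * (X 0)^2 * (X 1)^2 : R3) * h1 + (-(X 1 * X 0 * (X 2)^2) : R3) * h2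

lemma quotCharZero (P : Ideal R3) (hP : P.IsPrime) : CharZero (R3 ⧸ P) := by
  haveI := hP
  exact charZero_of_injective_algebraMap (RingHom.injective (algebraMap ℂ (R3 ⧸ P)))

lemma mkq (P : Ideal R3) {q : R3} (h : q ∈ P) (r : R3) :
    Ideal.Quotient.mk P (r * q) = 0 :=
  Ideal.Quotient.eq_zero_iff_mem.2 (P.mul_mem_left r h)

lemma mkC_ne_zero (P : Ideal R3) (hP : P.IsPrime) {t : ℂ} (ht : t ≠ 0) :
    Ideal.Quotient.mk P (C t) ≠ 0 := by
  haveI := hP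
  intro h0
  have h1 : Ideal.Quotient.mk P (C t) * Ideal.Quotient.mk P (C t⁻¹) = 1 := by
    rw [← map_mul, ← C_mul, mul_inv_cancel₀ ht, C_1, map_one]
  rw [h0, zero_mul] at h1
  exact zero_ne_one (α := R3 ⧸ P) h1

lemma linFactor (P : Ideal R3) (hP : P.IsPrime) (w : R3) (p : Polynomial ℂ) (hp : p ≠ 0)
    (hmem : Polynomial.aeval w p ∈ P) : ∃ a : ℂ, w - C a ∈ P := by
  have H : ∀ n : ℕ, ∀ p : Polynomial ℂ, p.natDegree ≤ n → p ≠ 0 →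
      Polynomial.aeval w p ∈ P → ∃ a : ℂ, w - C a ∈ P := by
    intro n
    induction n with
    | zero =>
      intro p hdeg hp hmem
      rw [Polynomial.eq_C_of_natDegree_le_zero hdeg] at hmem
      have hc : p.coeff 0 ≠ 0 := fun h => hp (by
        rw [Polynomial.eq_C_of_natDegree_le_zero hdeg, h, map_zero])
      rw [Polynomial.aeval_C] at hmem
      have h1 : (1 : R3) ∈ P := by
        have := P.mul_mem_left (C (p.coeff 0)⁻¹) hmem
        rwa [show (algebraMap ℂ R3) (p.coeff 0) = C (p.coeff 0) from rfl,
          ← C_mul, inv_mul_cancel₀ hc, C_1] at this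
      exact absurd ((Ideal.eq_top_iff_one P).2 h1) hP.ne_top
    | succ n ih =>
      intro p hdeg hp hmem
      by_cases h0 : p.natDegree = 0
      · exact ih p (by omega) hp hmem
      · have hdpos : 0 < p.degree := Polynomial.natDegree_pos_iff_degree_pos.1 (Nat.pos_of_ne_zero h0)
        obtain ⟨a, ha⟩ := Complex.exists_root hdpos
        obtain ⟨q, hq⟩ := Polynomial.dvd_iff_isRoot.2 ha
        have hq0 : q ≠ 0 := by rintro rfl; rw [mul_zero] at hq; exact hp hq
        have hXa : (Polynomial.X - Polynomial.C a : Polynomial ℂ) ≠ 0 := Polynomial.X_sub_C_ne_zero a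
        have hmem' : (w - C a) * Polynomial.aeval w q ∈ P := by
          have heq : Polynomial.aeval w p = (w - C a) * Polynomial.aeval w q := by
            rw [hq, map_mul, map_sub, Polynomial.aeval_X, Polynomial.aeval_C]
            rfl
          rwa [← heq]
        rcases hP.mem_or_mem hmem' with h | h
        · exact ⟨a, h⟩
        · refine ih q ?_ hq0 h
          have hnd := Polynomial.natDegree_mul hXa hq0
          rw [← hq, Polynomial.natDegree_X_sub_C] at hnd
          omega
  exact H p.natDegree p le_rfl hp hmem

lemma stepY (P : Ideal R3) (hP : P.IsPrime) (hst : DStarStable P) (hY : (X 1 : R3) ∈ P) :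
    (X 2 : R3) ∈ P := by
  haveI := hP
  haveI := quotCharZero P hP
  have hy : Ideal.Quotient.mk P (X 1) = 0 := Ideal.Quotient.eq_zero_iff_mem.2 hY
  have h1 := mkq P (hst.1 _ hY) (C 10)
  rw [hd1'] at h1
  simp only [map_mul, map_sub, map_add, map_neg, map_pow, map_ofNat] at h1
  have h2 : Ideal.Quotient.mk P (X 0) * (7 * Ideal.Quotient.mk P (X 2)^2) = 0 := by
    linear_combination h1 + (15 * Ideal.Quotient.mk P (X 0)^2 * Ideal.Quotient.mk P (X 1)) * hy
  rw [← Ideal.Quotient.eq_zero_iff_mem]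
  rcases mul_eq_zero.1 h2 with hx | h3
  · have hX : (X 0 : R3) ∈ P := Ideal.Quotient.eq_zero_iff_mem.1 hx
    have h4 := mkq P (hst.2.1 _ hX) (C 5)
    rw [he0'] at h4
    simp only [map_mul, map_sub, map_add, map_neg, map_pow, map_ofNat] at h4
    have h5 : (5760 : R3 ⧸ P) * Ideal.Quotient.mk P (X 2)^2 = 0 := by
      linear_combination -h4 + (1200 * Ideal.Quotient.mk P (X 1)^2
        + 4 * Ideal.Quotient.mk P (X 0)^2 * Ideal.Quotient.mk P (X 2)) * hx
    rcases mul_eq_zero.1 h5 with h6 | h6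
    · exact absurd h6 (by norm_num)
    · exact pow_eq_zero_iff (by norm_num) |>.1 h6
  · rcases mul_eq_zero.1 h3 with h6 | h6
    · exact absurd h6 (by norm_num)
    · exact pow_eq_zero_iff (by norm_num) |>.1 h6

lemma stepZ (P : Ideal R3) (hP : P.IsPrime) (hst : DStarStable P) (hZ : (X 2 : R3) ∈ P) :
    (X 1 : R3) ∈ P := by
  haveI := hP
  haveI := quotCharZero P hP
  have hz : Ideal.Quotient.mk P (X 2) = 0 := Ideal.Quotient.eq_zero_iff_mem.2 hZ
  have h1 := mkq P (hst.1 _ hZ) (C 5)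
  rw [hd2'] at h1
  simp only [map_mul, map_sub, map_add, map_neg, map_pow, map_ofNat] at h1
  have h2 : (1750 : R3 ⧸ P) * Ideal.Quotient.mk P (X 1)^3 = 0 := by
    linear_combination -h1 - 2 * Ideal.Quotient.mk P (X 1) * Ideal.Quotient.mk P (X 0)^2 * hz
  rw [← Ideal.Quotient.eq_zero_iff_mem]
  rcases mul_eq_zero.1 h2 with h3 | h3
  · exact absurd h3 (by norm_num)
  · exact pow_eq_zero_iff (by norm_num) |>.1 h3

lemma caseX (P : Ideal R3) (hP : P.IsPrime) (hst : DStarStable P) (a : ℂ)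
    (hXa : X 0 - C a ∈ P) : (X 1 : R3) ∈ P ∨ (X 2 : R3) ∈ P := by
  haveI := hP
  haveI := quotCharZero P hP
  have hx : Ideal.Quotient.mk P (X 0) = Ideal.Quotient.mk P (C a) := by
    rw [← sub_eq_zero, ← map_sub]; exact Ideal.Quotient.eq_zero_iff_mem.2 hXa
  have hdm : dstar (X 0) ∈ P := by
    have := hst.1 _ hXa; rwa [map_sub, derC, sub_zero] at this
  have h1 := mkq P hdm (C 5)
  rw [hd0'] at h1
  simp only [map_mul, map_sub, map_add, map_neg, map_pow, map_ofNat] at h1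
  rcases mul_eq_zero.1 h1 with h | h2
  · exact absurd h (by norm_num)
  rcases mul_eq_zero.1 h2 with hy | h3
  · exact Or.inl (Ideal.Quotient.eq_zero_iff_mem.1 hy)
  · right
    have hCa : (1050 : R3 ⧸ P) * Ideal.Quotient.mk P (C (a^3/1050))
        = Ideal.Quotient.mk P (C a) ^ 3 := by
      have hc : (C 1050 : R3) * C (a^3/1050) = C a ^ 3 := by
        rw [← map_pow, ← map_mul]; congr 1; field_simp
      calc (1050 : R3 ⧸ P) * Ideal.Quotient.mk P (C (a^3/1050))
          = Ideal.Quotient.mk P ((C 1050 : R3) * C (a^3/1050)) := by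
            simp only [map_mul, map_ofNat]
        _ = Ideal.Quotient.mk P (C a) ^ 3 := by rw [hc, map_pow]
    have h4 : (1050 : R3 ⧸ P) * (Ideal.Quotient.mk P (X 2) - Ideal.Quotient.mk P (C (a^3/1050))) = 0 := by
      linear_combination -h3 + (Ideal.Quotient.mk P (X 0)^2
        + Ideal.Quotient.mk P (X 0) * Ideal.Quotient.mk P (C a)
        + Ideal.Quotient.mk P (C a)^2) * hx - hCa
    have hz2 : Ideal.Quotient.mk P (X 2) - Ideal.Quotient.mk P (C (a^3/1050)) = 0 := by
      rcases mul_eq_zero.1 h4 with h | h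
      · exact absurd h (by norm_num)
      · exact h
    have hZmem : (X 2 : R3) - C (a^3/1050) ∈ P := by
      rw [← Ideal.Quotient.eq_zero_iff_mem, map_sub]; exact hz2
    have hz : Ideal.Quotient.mk P (X 2) = Ideal.Quotient.mk P (C (a^3/1050)) := sub_eq_zero.1 hz2
    have hem0 : estar (X 0) ∈ P := by
      have := hst.2.1 _ hXa; rwa [map_sub, derC, sub_zero] at this
    have hem2 : estar (X 2) ∈ P := by
      have := hst.2.1 _ hZmem; rwa [map_sub, derC, sub_zero] at this
    have hE1 := mkq P hem0 (C 5)
    have hE2 := mkq P hem2 (C 5)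
    rw [he0'] at hE1
    rw [he2'] at hE2
    simp only [map_mul, map_sub, map_add, map_neg, map_pow, map_ofNat, hx, hz] at hE1 hE2
    set A := Ideal.Quotient.mk P (C a) with hA
    set Cc := Ideal.Quotient.mk P (C (a^3/1050)) with hCcdef
    have key : (5400000 : R3 ⧸ P) * Cc^3 = 0 := by
      linear_combination (4*A^3 - 1200*Cc) * hE1 - 1200*A*hE2 + (16*A^3*Cc - 1440*Cc^2) * hCa
    have hCc : Cc = 0 := by
      rcases mul_eq_zero.1 key with h | h
      · exact absurd h (by norm_num)
      · exact pow_eq_zero_iff (by norm_num) |>.1 h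
    rw [← Ideal.Quotient.eq_zero_iff_mem, hz]
    exact hCc

lemma caseY (P : Ideal R3) (hP : P.IsPrime) (hst : DStarStable P) (b : ℂ)
    (hYb : X 1 - C b ∈ P) : (X 1 : R3) ∈ P ∨ (X 2 : R3) ∈ P := by
  by_cases hb : b = 0
  · left; rw [hb] at hYb; simpa using hYb
  haveI := hP
  haveI := quotCharZero P hP
  have hB := mkC_ne_zero P hP hb
  have hy : Ideal.Quotient.mk P (X 1) = Ideal.Quotient.mk P (C b) := by
    rw [← sub_eq_zero, ← map_sub]; exact Ideal.Quotient.eq_zero_iff_mem.2 hYb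
  have hdm : dstar (X 1) ∈ P := by
    have := hst.1 _ hYb; rwa [map_sub, derC, sub_zero] at this
  have hem : estar (X 1) ∈ P := by
    have := hst.2.1 _ hYb; rwa [map_sub, derC, sub_zero] at this
  have hfm : fstar (X 1) ∈ P := by
    have := hst.2.2 _ hYb; rwa [map_sub, derC, sub_zero] at this
  have hEd := mkq P hdm (C 10)
  have hEe := mkq P hem (C 5)
  have hEf := mkq P hfm (C 10)
  rw [hd1'] at hEd
  rw [he1'] at hEe
  rw [hf1'] at hEf
  simp only [map_mul, map_sub, map_add, map_neg, map_pow, map_ofNat, hy] at hEd hEe hEf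
  exfalso
  set x := Ideal.Quotient.mk P (X 0) with hxdef
  set z := Ideal.Quotient.mk P (X 2) with hzdef
  set B := Ideal.Quotient.mk P (C b) with hBdef
  have hQ : -6 * x^2 * z + 1000 * B^2 = 0 := by
    rcases mul_eq_zero.1 hEe with h | h
    · exact absurd h hB
    · linear_combination h
  have hxne : x ≠ 0 := by
    intro h0
    have h5 : (1000 : R3 ⧸ P) * B^2 = 0 := by linear_combination hQ + 6 * x * z * h0
    rcases mul_eq_zero.1 h5 with h | h
    · exact absurd h (by norm_num)
    · exact hB (pow_eq_zero_iff (by norm_num) |>.1 h)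
  have hzne : z ≠ 0 := by
    intro h0
    have h5 : (1000 : R3 ⧸ P) * B^2 = 0 := by linear_combination hQ + 6 * x^2 * h0
    rcases mul_eq_zero.1 h5 with h | h
    · exact absurd h (by norm_num)
    · exact hB (pow_eq_zero_iff (by norm_num) |>.1 h)
  have h1 : 7 * z^2 - 15 * x * B^2 = 0 := by
    rcases mul_eq_zero.1 hEd with h | h
    · exact absurd h hxne
    · linear_combination h
  have h2 : 35 * x * B^2 - 33 * z^2 = 0 := by
    rcases mul_eq_zero.1 hEf with h | h
    · exact absurd h hzne
    · linear_combination h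
  have h3 : (250 : R3 ⧸ P) * (x * B^2) = 0 := by
    linear_combination (-33) * h1 + (-7) * h2
  rcases mul_eq_zero.1 h3 with h | h
  · exact absurd h (by norm_num)
  rcases mul_eq_zero.1 h with h | h
  · exact hxne h
  · exact hB (pow_eq_zero_iff (by norm_num) |>.1 h)

lemma caseZ (P : Ideal R3) (hP : P.IsPrime) (hst : DStarStable P) (c : ℂ)
    (hZc : X 2 - C c ∈ P) : (X 1 : R3) ∈ P ∨ (X 2 : R3) ∈ P := by
  by_cases hc : c = 0
  · right; rw [hc] at hZc; simpa using hZc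
  haveI := hP
  haveI := quotCharZero P hP
  have hC := mkC_ne_zero P hP hc
  have hz : Ideal.Quotient.mk P (X 2) = Ideal.Quotient.mk P (C c) := by
    rw [← sub_eq_zero, ← map_sub]; exact Ideal.Quotient.eq_zero_iff_mem.2 hZc
  have hdm : dstar (X 2) ∈ P := by
    have := hst.1 _ hZc; rwa [map_sub, derC, sub_zero] at this
  have hem : estar (X 2) ∈ P := by
    have := hst.2.1 _ hZc; rwa [map_sub, derC, sub_zero] at this
  have hfm : fstar (X 2) ∈ P := by
    have := hst.2.2 _ hZc; rwa [map_sub, derC, sub_zero] at this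
  have hEd := mkq P hdm (C 5)
  have hEe := mkq P hem (C 5)
  have hEf := mkq P hfm (C 20)
  rw [hd2'] at hEd
  rw [he2'] at hEe
  rw [hf2'] at hEf
  simp only [map_mul, map_sub, map_add, map_neg, map_pow, map_ofNat, hz] at hEd hEe hEf
  set x := Ideal.Quotient.mk P (X 0) with hxdef
  set y := Ideal.Quotient.mk P (X 1) with hydef
  set Cc := Ideal.Quotient.mk P (C c) with hCcdef
  rcases mul_eq_zero.1 hEd with h | h2
  · exact absurd h (by norm_num)
  rcases mul_eq_zero.1 h2 with hy | h1
  · exact Or.inl (Ideal.Quotient.eq_zero_iff_mem.1 hy)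
  have h2' : x^2 * Cc * (5800*Cc + 4*x^3) = 0 := by
    linear_combination (-875) * hEe + (4*x^3 - 1200*Cc) * h1
  rcases mul_eq_zero.1 h2' with h | h3
  · rcases mul_eq_zero.1 h with h' | h'
    · have h5 : (875 : R3 ⧸ P) * y^2 = 0 := by linear_combination h1 - Cc * h'
      rcases mul_eq_zero.1 h5 with h'' | h''
      · exact absurd h'' (by norm_num)
      · exact Or.inl (Ideal.Quotient.eq_zero_iff_mem.1 (pow_eq_zero_iff (by norm_num) |>.1 h''))
    · exact absurd h' hC
  · rcases mul_eq_zero.1 hEf with hy | h4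
    · exact Or.inl (Ideal.Quotient.eq_zero_iff_mem.1 hy)
    have h5 : x * Cc * (55*x^3 + 51625*Cc) = 0 := by
      linear_combination (-875) * h4 + 55 * x^2 * h1
    rcases mul_eq_zero.1 h5 with h | h6
    · rcases mul_eq_zero.1 h with h' | h'
      · exfalso
        have h7 : (5800 : R3 ⧸ P) * Cc = 0 := by linear_combination h3 - 4 * x^2 * h'
        rcases mul_eq_zero.1 h7 with h'' | h''
        · exact absurd h'' (by norm_num)
        · exact hC h''
      · exact absurd h' hC
    · exfalso
      have h7 : (112500 : R3 ⧸ P) * Cc = 0 := by linear_combination 55 * h3 - 4 * h6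
      rcases mul_eq_zero.1 h7 with h'' | h''
      · exact absurd h'' (by norm_num)
      · exact hC h''

lemma core (P : Ideal R3) (hP : P.IsPrime) (hst : DStarStable P)
    (h : (∃ a : ℂ, X 0 - C a ∈ P) ∨ (∃ b : ℂ, X 1 - C b ∈ P) ∨ (∃ c : ℂ, X 2 - C c ∈ P)) :
    (X 1 : R3) ∈ P ∧ (X 2 : R3) ∈ P := by
  have hor : (X 1 : R3) ∈ P ∨ (X 2 : R3) ∈ P := by
    rcases h with ⟨a, ha⟩ | ⟨b, hb⟩ | ⟨c, hc⟩
    · exact caseX P hP hst a ha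
    · exact caseY P hP hst b hb
    · exact caseZ P hP hst c hc
  rcases hor with h1 | h2
  · exact ⟨h1, stepY P hP hst h1⟩
  · exact ⟨stepZ P hP hst h2, h2⟩

end Aux

/-- If `P` is a prime `𝔇*`-stable ideal of `R` meeting one of `ℂ[X]`, `ℂ[Y]`,
`ℂ[Z]` nontrivially, then `(Y, Z) ⊆ P`; in particular `χ ∈ P`. -/
theorem span_YZ_le_of_stable_meets_one_variable (P : Ideal R3) (hP : P.IsPrime)
    (hst : DStarStable P)
    (hmeet :
      (∃ p : Polynomial ℂ, Polynomial.aeval (X 0 : R3) p ∈ P ∧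
        Polynomial.aeval (X 0 : R3) p ≠ 0) ∨
      (∃ p : Polynomial ℂ, Polynomial.aeval (X 1 : R3) p ∈ P ∧
        Polynomial.aeval (X 1 : R3) p ≠ 0) ∨
      (∃ p : Polynomial ℂ, Polynomial.aeval (X 2 : R3) p ∈ P ∧
        Polynomial.aeval (X 2 : R3) p ≠ 0)) :
    Ideal.span {(X 1 : R3), X 2} ≤ P ∧ chi ∈ P := by
  have hfac : (∃ a : ℂ, X 0 - C a ∈ P) ∨ (∃ b : ℂ, X 1 - C b ∈ P) ∨ (∃ c : ℂ, X 2 - C c ∈ P) := by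
    rcases hmeet with ⟨p, hpm, hpne⟩ | ⟨p, hpm, hpne⟩ | ⟨p, hpm, hpne⟩
    · exact Or.inl (linFactor P hP _ p (fun h => hpne (by rw [h, map_zero])) hpm)
    · exact Or.inr (Or.inl (linFactor P hP _ p (fun h => hpne (by rw [h, map_zero])) hpm))
    · exact Or.inr (Or.inr (linFactor P hP _ p (fun h => hpne (by rw [h, map_zero])) hpm))
  obtain ⟨hY, hZ⟩ := core P hP hst hfac
  constructor
  · rw [Ideal.span_le]
    rintro r hr
    simp only [Set.mem_insert_iff, Set.mem_singleton_iff] at hr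
    rcases hr with rfl | rfl
    · exact hY
    · exact hZ
  · have hchi : chi = (C (484/49) * (C 50000*(X 1)^5 - C 1000*(X 0)^2*X 2*(X 1)^3
        + (X 0)^5*(X 1)^3 - C 2*(X 0)^4*(X 2)^2*(X 1)
        + C 1800*(X 0)*(X 2)^3*(X 1))) * X 1
        + (C (484/49)*((X 0)^3*(X 2)^3 - C 864*(X 2)^4)) * X 2 := by
      simp only [chi]; ring
    rw [hchi]
    exact P.add_mem (P.mul_mem_left _ hY) (P.mul_mem_left _ hZ)
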